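/- arXiv:1704.07481 — 2 statements merged into one kernel-verified Lean document; each statement's English description precedes it below -/
import Mathlib

section
/- If X is a Poisson random variable with intensity λ > 0 and x ≥ 1, then P(X > x) < (1 - e^{-λ})^x. -/
/-!
Write `T n = P(X ≥ n)`. Comparing `T n` termwise with the exponential series, using
`n! k! ≤ (n + k)!`, gives `T n ≤ λⁿ / n! = e^λ P(X = n)`. Hence
`T (n + 1) = T n - P(X = n) ≤ (1 - e^{-λ}) T n`, and by induction `T n ≤ (1 - e^{-λ})ⁿ`.
For real `x ≥ 0` the event `X > x` is `X ≥ ⌊x⌋ + 1`, and since `⌊x⌋ + 1 > x` while the base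
`1 - e^{-λ}` lies in `(0, 1)`, the bound becomes strict.
-/

open MeasureTheory ProbabilityTheory Real Set
open scoped NNReal Nat

namespace ProbabilityTheory

variable (r : ℝ≥0)

lemma poissonMeasure_real_Ici (n : ℕ) :
    Po(r).real (Ici n) = ∑' k, exp (-r) * r ^ (n + k) / (n + k)! := by
  have hunion : Ici n = ⋃ k, {n + k} := by
    ext m
    simp only [mem_Ici, mem_iUnion, mem_singleton_iff]
    exact ⟨fun h => ⟨m - n, by omega⟩, fun ⟨k, hk⟩ => by omega⟩
  have hdisj : Pairwise (Function.onFun Disjoint fun k : ℕ => ({n + k} : Set ℕ)) :=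
    fun i j hij => by simpa [Function.onFun] using hij
  rw [hunion, measureReal_def, measure_iUnion hdisj fun _ => .of_discrete,
    ENNReal.tsum_toReal_eq fun _ => measure_ne_top _ _]
  exact tsum_congr fun k => poissonMeasure_real_singleton r (n + k)

lemma poissonMeasure_real_Ici_le (n : ℕ) : Po(r).real (Ici n) ≤ r ^ n / n ! := by
  have hexp : HasSum (fun k : ℕ => (r : ℝ) ^ k / k !) (exp r) := by
    rw [exp_eq_exp_ℝ]
    exact NormedSpace.expSeries_div_hasSum_exp (r : ℝ)
  have hterm (k : ℕ) :
      exp (-r) * r ^ (n + k) / (n + k)! ≤ exp (-r) * (r ^ n / n !) * (r ^ k / k !) := by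
    have hfact : ((n ! * k ! : ℕ) : ℝ) ≤ (n + k)! := by
      exact_mod_cast Nat.le_of_dvd (n + k).factorial_pos
        (Nat.factorial_mul_factorial_dvd_factorial_add n k)
    calc exp (-r) * r ^ (n + k) / (n + k)!
        ≤ exp (-r) * r ^ (n + k) / ((n ! * k ! : ℕ) : ℝ) := by gcongr
      _ = exp (-r) * (r ^ n / n !) * (r ^ k / k !) := by push_cast; rw [pow_add]; ring
  have hsummable : Summable fun k => exp (-r) * r ^ (n + k) / (n + k)! := by
    simpa [add_comm] using (summable_nat_add_iff n).2 (hasSum_one_poissonMeasure r).summable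
  calc Po(r).real (Ici n)
      = ∑' k, exp (-r) * r ^ (n + k) / (n + k)! := poissonMeasure_real_Ici r n
    _ ≤ ∑' k, exp (-r) * (r ^ n / n !) * (r ^ k / k !) :=
        hsummable.tsum_le_tsum hterm (hexp.summable.mul_left _)
    _ = r ^ n / n ! := by
        rw [(hexp.mul_left _).tsum_eq, exp_neg]
        field_simp

lemma poissonMeasure_real_Ici_eq_add (n : ℕ) :
    Po(r).real (Ici n) = Po(r).real {n} + Po(r).real (Ici (n + 1)) := by
  rw [← measureReal_union (by simp) .of_discrete]
  congr 1
  ext m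
  simp only [mem_Ici, mem_union, mem_singleton_iff]
  omega

lemma poissonMeasure_real_Ici_le_pow (n : ℕ) :
    Po(r).real (Ici n) ≤ (1 - exp (-r)) ^ n := by
  induction n with
  | zero => simp
  | succ n ih =>
    have hpoint : exp (-r) * Po(r).real (Ici n) ≤ Po(r).real {n} := by
      calc exp (-r) * Po(r).real (Ici n) ≤ exp (-r) * (r ^ n / n !) := by
            gcongr
            exact poissonMeasure_real_Ici_le r n
        _ = Po(r).real {n} := by rw [poissonMeasure_real_singleton]; ring
    calc Po(r).real (Ici (n + 1)) ≤ (1 - exp (-r)) * Po(r).real (Ici n) := by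
          linarith [poissonMeasure_real_Ici_eq_add r n]
      _ ≤ (1 - exp (-r)) * (1 - exp (-r)) ^ n := by
          gcongr
          linarith [exp_le_one_iff.2 (neg_nonpos.2 r.coe_nonneg)]
      _ = (1 - exp (-r)) ^ (n + 1) := by ring

lemma poissonMeasure_real_lt_rpow {r : ℝ≥0} (hr : 0 < r) {x : ℝ} (hx : 0 ≤ x) :
    Po(r).real {k : ℕ | x < k} < (1 - exp (-r)) ^ x := by
  set N := ⌊x⌋₊ + 1
  have hset : {k : ℕ | x < k} = Ici N := by
    ext k
    simp only [mem_ofPred_eq, mem_Ici, N, Nat.add_one_le_iff, Nat.floor_lt hx]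
  have hq0 : 0 < 1 - exp (-r) := by
    linarith [exp_lt_one_iff.2 (neg_lt_zero.2 (NNReal.coe_pos.2 hr))]
  have hq1 : 1 - exp (-r) < 1 := by linarith [exp_pos (-r)]
  calc Po(r).real {k : ℕ | x < k} ≤ (1 - exp (-r)) ^ N := by
        rw [hset]
        exact poissonMeasure_real_Ici_le_pow r N
    _ = (1 - exp (-r)) ^ (N : ℝ) := (rpow_natCast _ N).symm
    _ < (1 - exp (-r)) ^ x := by
        refine rpow_lt_rpow_of_exponent_gt hq0 hq1 ?_
        simpa [N] using Nat.lt_floor_add_one x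

end ProbabilityTheory

theorem stmt_0_general {Ω : Type*} [MeasurableSpace Ω] (P : Measure Ω)
    (X : Ω → ℕ) (hX : Measurable X) (lam : NNReal) (hlam : 0 < lam)
    (hlaw : P.map X = ProbabilityTheory.poissonMeasure lam)
    (x : ℝ) (hx : 1 ≤ x) :
    (P {ω | x < (X ω : ℝ)}).toReal < (1 - Real.exp (-(lam : ℝ))) ^ x := by
  calc (P {ω | x < (X ω : ℝ)}).toReal = Po(lam).real {k : ℕ | x < k} := by
        rw [← hlaw, map_measureReal_apply hX .of_discrete]
        rfl
    _ < (1 - exp (-lam)) ^ x := poissonMeasure_real_lt_rpow hlam (zero_le_one.trans hx)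

theorem stmt_0 {Ω : Type*} [MeasurableSpace Ω] (P : Measure Ω) [IsProbabilityMeasure P]
    (X : Ω → ℕ) (hX : Measurable X) (lam : NNReal) (hlam : 0 < lam)
    (hlaw : P.map X = ProbabilityTheory.poissonMeasure lam)
    (x : ℝ) (hx : 1 ≤ x) :
    (P {ω | x < (X ω : ℝ)}).toReal < (1 - Real.exp (-(lam : ℝ))) ^ x :=
  stmt_0_general P X hX lam hlam hlaw x hx
end

section
/- Let W be a standard Brownian motion, T̄ > 0, n ≥ 2, and define Λ_n(δ) = sup{ |W(u+h) - W(u)| : u, h ≥ 0, u+h ≤ n·T̄, h ≤ δ·log n } and Λ̄_n = sup_{0 ≤ δ ≤ n·T̄} (δ+1)^{-1/2}·Λ_n(δ). Then there exist a nonnegative random variable L_n and positive constants c, κ, λ (independent of n) such that Λ̄_n ≤ c·log n + L_n and P(L_n > x) ≤ κ·n^{-2}·exp(-λx - x²/(18·log n)) for all x ≥ 0. -/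
open MeasureTheory

/-- A standard one-dimensional Brownian motion: continuous paths starting at 0, with
Gaussian stationary increments that are independent over disjoint intervals. -/
def IsBrownianMotion {Ω : Type*} [MeasurableSpace Ω] (P : Measure Ω)
    (W : ℝ → Ω → ℝ) : Prop :=
  (∀ ω, W 0 ω = 0) ∧
  (∀ ω, Continuous fun t => W t ω) ∧
  (∀ s t : ℝ, 0 ≤ s → s ≤ t →
    P.map (fun ω => W t ω - W s ω) = ProbabilityTheory.gaussianReal 0 (Real.toNNReal (t - s))) ∧
  (∀ (m : ℕ) (u : ℕ → ℝ), Monotone u → (∀ j, 0 ≤ u j) →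
    ProbabilityTheory.iIndepFun (m := fun _ => inferInstance)
      (fun j : Fin m => fun ω => W (u (j + 1)) ω - W (u j) ω) P)

/-!
Fix `ℓ = log n`. For `j ≤ n T̄` cover `[0, n T̄]` by the blocks `[i θⱼ, (i + 2) θⱼ]`,
`θⱼ = (j + 1) ℓ`: an increment over a window of length `h ≤ δ ℓ` with `⌊δ⌋ = j` lies in a
single block, so if `W` oscillates by at most `y √(j + 1) / 2` on every block then
`Λ̄ₙ ≤ y`. On one block, Lévy's maximal inequality on dyadic grids, path continuity and the
Gaussian tail bound the oscillation probability by `4 exp (-y² / (16 ℓ))`. With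
`y = 8 ℓ + x` this is `4 n⁻⁴ exp (-x - x² / (16 ℓ))`, and there are `O(n²)` blocks, so
`Lₙ = (Λ̄ₙ - 8 ℓ)⁺` works with `c = 8` and `λ = 1`.
-/

open ProbabilityTheory Real Finset
open scoped NNReal ENNReal

namespace ProbabilityTheory

variable {Ω : Type*} [MeasurableSpace Ω] {P : Measure Ω} {X : Ω → ℝ} {v : ℝ≥0}

lemma HasLaw.hasSubgaussianMGF_of_gaussianReal (hX : HasLaw X (gaussianReal 0 v) P) :
    HasSubgaussianMGF X v P := by
  rw [← HasSubgaussianMGF.id_map_iff hX.aemeasurable, hX.map_eq]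
  exact ⟨integrable_exp_mul_gaussianReal, fun t => by simp [mgf_id_gaussianReal]⟩

lemma HasLaw.measure_ge_le_of_gaussianReal (hX : HasLaw X (gaussianReal 0 v) P) {z : ℝ}
    (hz : 0 ≤ z) : P {ω | z ≤ X ω} ≤ ENNReal.ofReal (exp (-z ^ 2 / (2 * v))) := by
  have := hX.isProbabilityMeasure
  rw [← ofReal_measureReal]
  exact ENNReal.ofReal_le_ofReal (hX.hasSubgaussianMGF_of_gaussianReal.measure_ge_le hz)

lemma HasLaw.neg_of_gaussianReal (hX : HasLaw X (gaussianReal 0 v) P) :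
    HasLaw (fun ω => -X ω) (gaussianReal 0 v) P := by
  simpa [Pi.neg_def] using gaussianReal_neg hX

lemma gaussianReal_Ici_zero_ge_half (v : ℝ≥0) : 2⁻¹ ≤ gaussianReal 0 v (Set.Ici 0) := by
  have hsymm : gaussianReal 0 v (Set.Iic 0) = gaussianReal 0 v (Set.Ici 0) := by
    conv_lhs => rw [← neg_zero, ← gaussianReal_map_neg]
    rw [Measure.map_apply measurable_neg measurableSet_Iic]
    simp
  have hcover : 1 ≤ gaussianReal 0 v (Set.Ici 0) + gaussianReal 0 v (Set.Iic 0) := by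
    rw [← measure_univ (μ := gaussianReal 0 v), ← Set.Ici_union_Iic (a := (0:ℝ))]
    exact measure_union_le _ _
  rw [hsymm, ← two_mul] at hcover
  exact (ENNReal.inv_le_iff_le_mul (by simp) (by simp)).2 hcover

lemma HasLaw.half_le_measure_nonneg_of_gaussianReal (hX : HasLaw X (gaussianReal 0 v) P) :
    2⁻¹ ≤ P {ω | 0 ≤ X ω} := by
  rw [hX.measure_eq measurableSet_Ici]
  exact gaussianReal_Ici_zero_ge_half v

lemma iIndepFun.indepFun_partialSums_sum_Ico {X : ℕ → Ω → ℝ} (hind : iIndepFun X P)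
    (hX : ∀ i, AEMeasurable (X i) P) (k M : ℕ) :
    IndepFun (fun ω (i : Fin (k + 1)) => ∑ j ∈ range i, X j ω)
      (fun ω => ∑ j ∈ Ico k M, X j ω) P := by
  have hdisj : Disjoint (range k) (Ico k M) := by
    rw [range_eq_Ico]; exact Ico_disjoint_Ico_consecutive 0 k M
  have h := (hind.indepFun_finset₀ _ _ hdisj hX).comp
    (φ := fun (v : range k → ℝ) (i : Fin (k + 1)) => ∑ j : Fin i, v ⟨j, mem_range.2 (by omega)⟩)
    (ψ := fun (v : Ico k M → ℝ) => ∑ j, v j) (by fun_prop) (by fun_prop)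
  convert h using 1
  · ext ω i
    simp [Fin.sum_univ_eq_sum_range (fun j => X j ω)]
  · ext ω
    exact (sum_attach _ _).symm

lemma IndepFun.measure_preimage_le_two_mul {β γ : Type*} [MeasurableSpace β] [MeasurableSpace γ]
    {f : Ω → β} {g : Ω → γ} (h : IndepFun f g P) {s : Set β} {t : Set γ} (hs : MeasurableSet s)
    (ht : MeasurableSet t) (hgt : 2⁻¹ ≤ P (g ⁻¹' t)) :
    P (f ⁻¹' s) ≤ 2 * P (f ⁻¹' s ∩ g ⁻¹' t) := by
  calc P (f ⁻¹' s) = 2 * (P (f ⁻¹' s) * 2⁻¹) := by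
        rw [mul_comm (P _), ← mul_assoc, ENNReal.mul_inv_cancel two_ne_zero ENNReal.ofNat_ne_top,
          one_mul]
    _ ≤ 2 * (P (f ⁻¹' s) * P (g ⁻¹' t)) := by gcongr
    _ = 2 * P (f ⁻¹' s ∩ g ⁻¹' t) := by rw [h.measure_inter_preimage_eq_mul _ _ hs ht]

lemma levy_maximal_ineq {S : ℕ → Ω → ℝ} (hS : ∀ k, AEMeasurable (S k) P) {M : ℕ}
    (hind : ∀ k ≤ M, IndepFun (fun ω (i : Fin (k + 1)) => S i ω) (fun ω => S M ω - S k ω) P)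
    (hmed : ∀ k ≤ M, 2⁻¹ ≤ P {ω | S k ω ≤ S M ω}) (z : ℝ) :
    P {ω | ∃ k ≤ M, z ≤ S k ω} ≤ 2 * P {ω | z ≤ S M ω} := by
  classical
  -- Split according to the first time `k` at which `S` reaches `z`: this event depends on
  -- `S 0, …, S k` only, so by `hind` and `hmed` the walk ends above `z` with conditional
  -- probability at least `1 / 2`.
  set A : ℕ → Set Ω := fun k => {ω | z ≤ S k ω ∧ ∀ i < k, S i ω < z}
  set B : ℕ → Set Ω := fun k => {ω | S k ω ≤ S M ω}
  set C : ∀ k, Set (Fin (k + 1) → ℝ) := fun k =>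
    {v | z ≤ v (Fin.last k) ∧ ∀ i : Fin (k + 1), (i : ℕ) < k → v i < z}
  have hC : ∀ k, MeasurableSet (C k) := fun k => by measurability
  have hA_eq : ∀ k, A k = (fun ω (i : Fin (k + 1)) => S i ω) ⁻¹' C k := fun k => by
    ext ω
    simp only [A, C, Set.mem_ofPred_eq, Set.mem_preimage, Fin.val_last]
    exact and_congr_right fun _ => ⟨fun h i hi => h i hi, fun h i hi => h ⟨i, by omega⟩ hi⟩
  have hB_eq : ∀ k, B k = (fun ω => S M ω - S k ω) ⁻¹' Set.Ici 0 := fun k => by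
    ext ω; simp [B]
  have hA_disj : (range (M + 1) : Set ℕ).PairwiseDisjoint A := by
    refine (pairwise_disjoint_on A).2 (fun a b hab => Set.disjoint_left.2 ?_) |>.set_pairwise _
    exact fun ω ha hb => (hb.2 a hab).not_ge ha.1
  have hAB_meas : ∀ k, NullMeasurableSet (A k ∩ B k) P := fun k => by
    rw [hA_eq, hB_eq]
    exact ((aemeasurable_pi_lambda (fun ω (i : Fin (k + 1)) => S i ω) fun i => hS i).nullMeasurable
      (hC k)).inter
      (((hS M).sub (hS k)).nullMeasurable measurableSet_Ici)
  have hA_cover : {ω | ∃ k ≤ M, z ≤ S k ω} ⊆ ⋃ k ∈ range (M + 1), A k := by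
    rintro ω ⟨k, hkM, hk⟩
    have hex : ∃ j, z ≤ S j ω := ⟨k, hk⟩
    refine Set.mem_biUnion (mem_range.2 (Nat.lt_succ_of_le ((Nat.find_min' hex hk).trans hkM)))
      ⟨Nat.find_spec hex, fun i hi => not_le.1 (Nat.find_min hex hi)⟩
  have hA_le : ∀ k ≤ M, P (A k) ≤ 2 * P (A k ∩ B k) := fun k hk => by
    rw [hA_eq, hB_eq]
    exact (hind k hk).measure_preimage_le_two_mul (hC k) measurableSet_Ici
      (by rw [← hB_eq]; exact hmed k hk)
  calc P {ω | ∃ k ≤ M, z ≤ S k ω}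
      ≤ ∑ k ∈ range (M + 1), P (A k) :=
        (measure_mono hA_cover).trans (measure_biUnion_finset_le _ _)
    _ ≤ ∑ k ∈ range (M + 1), 2 * P (A k ∩ B k) :=
        sum_le_sum fun k hk => hA_le k (Nat.lt_succ_iff.1 (mem_range.1 hk))
    _ = 2 * P (⋃ k ∈ range (M + 1), A k ∩ B k) := by
        rw [← mul_sum, measure_biUnion_finset₀
          ((hA_disj.mono fun k => Set.inter_subset_left).aedisjoint) fun k _ => hAB_meas k]
    _ ≤ 2 * P {ω | z ≤ S M ω} := by
        gcongr
        exact Set.iUnion₂_subset fun k _ ω hω => hω.1.1.trans hω.2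

lemma levy_maximal_ineq_abs {S : ℕ → Ω → ℝ} (hS : ∀ k, AEMeasurable (S k) P) {M : ℕ}
    (hind : ∀ k ≤ M, IndepFun (fun ω (i : Fin (k + 1)) => S i ω) (fun ω => S M ω - S k ω) P)
    (hmed : ∀ k ≤ M, 2⁻¹ ≤ P {ω | S k ω ≤ S M ω} ∧ 2⁻¹ ≤ P {ω | S M ω ≤ S k ω}) (z : ℝ) :
    P {ω | ∃ k ≤ M, z < |S k ω|} ≤ 2 * P {ω | z ≤ S M ω} + 2 * P {ω | z ≤ -S M ω} := by
  have hneg : P {ω | ∃ k ≤ M, z ≤ -S k ω} ≤ 2 * P {ω | z ≤ -S M ω} := by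
    refine levy_maximal_ineq (S := fun k ω => -S k ω) (fun k => (hS k).neg)
      (fun k hk => ?_) (fun k hk => by simpa using (hmed k hk).2) z
    convert (hind k hk).comp (φ := fun (v : Fin (k + 1) → ℝ) i => -v i) (ψ := fun x : ℝ => -x)
      (by fun_prop) (by fun_prop) using 1
    · rfl
    · funext ω
      simp only [Function.comp_apply]
      ring
  have hcover : {ω | ∃ k ≤ M, z < |S k ω|}
      ⊆ {ω | ∃ k ≤ M, z ≤ S k ω} ∪ {ω | ∃ k ≤ M, z ≤ -S k ω} := by
    rintro ω ⟨k, hk, hzk⟩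
    rcases lt_abs.1 hzk with h | h
    exacts [Or.inl ⟨k, hk, h.le⟩, Or.inr ⟨k, hk, h.le⟩]
  exact (measure_mono hcover).trans <| (measure_union_le _ _).trans <|
    add_le_add (levy_maximal_ineq hS hind (fun k hk => (hmed k hk).1) z) hneg

end ProbabilityTheory

lemma exists_dyadic_mem_of_isOpen {U : Set ℝ} (hU : IsOpen U) {a h t : ℝ}
    (ht : t ∈ Set.Icc a (a + h)) (htU : t ∈ U) :
    ∃ m i : ℕ, i ≤ 2 ^ m ∧ a + i * (h / 2 ^ m) ∈ U := by
  obtain ⟨ε, hε, hball⟩ := Metric.isOpen_iff.1 hU t htU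
  rcases (show 0 ≤ h by linarith [ht.1, ht.2]).eq_or_lt with rfl | hh
  · exact ⟨0, 0, Nat.zero_le _, by simpa [le_antisymm (by simpa using ht.2) ht.1] using htU⟩
  obtain ⟨m, hm⟩ := pow_unbounded_of_one_lt (h / ε) one_lt_two
  set d := h / 2 ^ m
  have hd : 0 < d := by positivity
  have hdε : d < ε := by rwa [div_lt_iff₀ (by positivity), mul_comm, ← div_lt_iff₀ hε]
  set i := ⌊(t - a) / d⌋₊
  have hi_le : (i : ℝ) * d ≤ t - a :=
    (le_div_iff₀ hd).1 (Nat.floor_le (div_nonneg (by linarith [ht.1]) hd.le))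
  have hi_lt : t - a < (i + 1) * d := (div_lt_iff₀ hd).1 (Nat.lt_floor_add_one _)
  refine ⟨m, i, Nat.floor_le_of_le ?_, hball ?_⟩
  · rw [div_le_iff₀ hd]
    have : (2 : ℝ) ^ m * d = h := mul_div_cancel₀ h (by positivity)
    push_cast; linarith [ht.2]
  · rw [Metric.mem_ball, Real.dist_eq, abs_lt]
    constructor <;> nlinarith

-- For `f = (W · ω)`, `incrementSup f (n T̄) (δ log n)` is the paper's `Λₙ(δ)` and
-- `weightedModulus f (n T̄) (log n)` is `Λ̄ₙ`.
noncomputable def incrementSup (f : ℝ → ℝ) (T r : ℝ) : ℝ :=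
  ⨆ p : {p : ℝ × ℝ // 0 ≤ p.1 ∧ 0 ≤ p.2 ∧ p.1 + p.2 ≤ T ∧ p.2 ≤ r}, |f (p.1.1 + p.1.2) - f p.1.1|

noncomputable def weightedModulus (f : ℝ → ℝ) (T ℓ : ℝ) : ℝ :=
  ⨆ δ : Set.Icc (0 : ℝ) T, ((δ : ℝ) + 1) ^ (-(1 : ℝ) / 2) * incrementSup f T (δ * ℓ)

lemma abs_sub_le_of_oscillation_le {f : ℝ → ℝ} {θ z u h : ℝ} (hθ : 0 < θ) (hu : 0 ≤ u)
    (hh : 0 ≤ h) (hhθ : h ≤ θ)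
    (hosc : ∀ r ∈ Set.Icc (⌊u / θ⌋₊ * θ) ((⌊u / θ⌋₊ + 2) * θ), |f r - f (⌊u / θ⌋₊ * θ)| ≤ z) :
    |f (u + h) - f u| ≤ 2 * z := by
  have hlo : ⌊u / θ⌋₊ * θ ≤ u := (le_div_iff₀ hθ).1 (Nat.floor_le (div_nonneg hu hθ.le))
  have hhi : u < (⌊u / θ⌋₊ + 1) * θ := (div_lt_iff₀ hθ).1 (Nat.lt_floor_add_one _)
  have h₁ := hosc (u + h) ⟨by linarith, by linarith⟩
  have h₂ := hosc u ⟨hlo, by linarith⟩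
  have h₃ := abs_sub_le (f (u + h)) (f (⌊u / θ⌋₊ * θ)) (f u)
  rw [abs_sub_comm (f (⌊u / θ⌋₊ * θ))] at h₃
  linarith

lemma incrementSup_le {f : ℝ → ℝ} {T ℓ δ z : ℝ} (hℓ : 0 < ℓ) (hz : 0 ≤ z)
    (hosc : ∀ i ≤ ⌊T / ℓ⌋₊, ∀ r ∈ Set.Icc (i * ((⌊δ⌋₊ + 1) * ℓ)) ((i + 2) * ((⌊δ⌋₊ + 1) * ℓ)),
      |f r - f (i * ((⌊δ⌋₊ + 1) * ℓ))| ≤ z) :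
    incrementSup f T (δ * ℓ) ≤ 2 * z := by
  refine Real.iSup_le (fun ⟨⟨u, h⟩, hu, hh, huhT, hhδ⟩ => ?_) (by positivity)
  have hθ : ℓ ≤ (⌊δ⌋₊ + 1) * ℓ := le_mul_of_one_le_left hℓ.le (by simp)
  refine abs_sub_le_of_oscillation_le (by positivity) hu hh ?_ (hosc _ ?_)
  · exact hhδ.trans (mul_le_mul_of_nonneg_right (Nat.lt_floor_add_one δ).le hℓ.le)
  · exact Nat.floor_mono (div_le_div₀ (by linarith) (by linarith) hℓ hθ)

lemma weightedModulus_le {f : ℝ → ℝ} {T ℓ y : ℝ} (hℓ : 0 < ℓ) (hy : 0 ≤ y)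
    (hosc : ∀ j ≤ ⌊T⌋₊, ∀ i ≤ ⌊T / ℓ⌋₊,
      ∀ r ∈ Set.Icc (i * ((j + 1) * ℓ)) ((i + 2) * ((j + 1) * ℓ)),
        |f r - f (i * ((j + 1) * ℓ))| ≤ y * √(j + 1) / 2) :
    weightedModulus f T ℓ ≤ y := by
  refine Real.iSup_le (fun ⟨δ, hδ0, hδT⟩ => ?_) hy
  have hδ1 : 0 < δ + 1 := by linarith
  have hinc := incrementSup_le hℓ (by positivity) (hosc _ (Nat.floor_mono hδT))
  calc (δ + 1) ^ (-(1 : ℝ) / 2) * incrementSup f T (δ * ℓ)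
      ≤ (δ + 1) ^ (-(1 : ℝ) / 2) * (y * √(δ + 1)) := by
        gcongr
        refine hinc.trans ?_
        rw [mul_div_cancel₀ _ two_ne_zero]
        gcongr
        exact Nat.floor_le hδ0
    _ = y := by
        rw [sqrt_eq_rpow, mul_left_comm, ← rpow_add hδ1]
        norm_num

namespace IsBrownianMotion

variable {Ω : Type*} [MeasurableSpace Ω] {P : Measure Ω} {W : ℝ → Ω → ℝ}

lemma hasLaw_sub (hW : IsBrownianMotion P W) {s t : ℝ} (hs : 0 ≤ s) (hst : s ≤ t) :
    HasLaw (fun ω => W t ω - W s ω) (gaussianReal 0 (t - s).toNNReal) P where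
  aemeasurable := aemeasurable_of_map_neZero (by rw [hW.2.2.1 s t hs hst]; infer_instance)
  map_eq := hW.2.2.1 s t hs hst

lemma iIndepFun_increments (hW : IsBrownianMotion P W) {u : ℕ → ℝ} (hu : Monotone u)
    (hu0 : ∀ j, 0 ≤ u j) :
    iIndepFun (fun j ω => W (u (j + 1)) ω - W (u j) ω) P := by
  refine iIndepFun_iff_finset.2 fun s => ?_
  have hlt : ∀ i ∈ s, i < s.sup id + 1 := fun i hi => Nat.lt_succ_of_le (le_sup (f := id) hi)
  exact (hW.2.2.2 _ u hu hu0).precomp (g := fun i : s => ⟨i, hlt i i.2⟩)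
    fun i j hij => Subtype.ext (congrArg Fin.val hij)

lemma indepFun_prefix_sub (hW : IsBrownianMotion P W) {u : ℕ → ℝ} (hu : Monotone u)
    (hu0 : ∀ j, 0 ≤ u j) {k M : ℕ} (hkM : k ≤ M) :
    IndepFun (fun ω (i : Fin (k + 1)) => W (u i) ω - W (u 0) ω)
      (fun ω => W (u M) ω - W (u k) ω) P := by
  have h := (hW.iIndepFun_increments hu hu0).indepFun_partialSums_sum_Ico
    (fun j => (hW.hasLaw_sub (hu0 j) (hu j.le_succ)).aemeasurable) k M
  convert h using 1
  · ext ω i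
    exact (sum_range_sub (fun j => W (u j) ω) i).symm
  · ext ω
    exact (sum_Ico_sub (fun j => W (u j) ω) hkM).symm

lemma measure_exists_lt_abs_sub_le (hW : IsBrownianMotion P W) {u : ℕ → ℝ} (hu : Monotone u)
    (hu0 : ∀ j, 0 ≤ u j) (M : ℕ) {z : ℝ} (hz : 0 ≤ z) :
    P {ω | ∃ k ≤ M, z < |W (u k) ω - W (u 0) ω|}
      ≤ 4 * ENNReal.ofReal (exp (-z ^ 2 / (2 * (u M - u 0)))) := by
  have hlaw := hW.hasLaw_sub (hu0 0) (hu (Nat.zero_le M))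
  have hvar : ((u M - u 0).toNNReal : ℝ) = u M - u 0 :=
    Real.coe_toNNReal _ (sub_nonneg.2 (hu (Nat.zero_le M)))
  have hmed : ∀ k ≤ M, 2⁻¹ ≤ P {ω | W (u k) ω - W (u 0) ω ≤ W (u M) ω - W (u 0) ω} ∧
      2⁻¹ ≤ P {ω | W (u M) ω - W (u 0) ω ≤ W (u k) ω - W (u 0) ω} := by
    intro k hk
    have hlawk := hW.hasLaw_sub (hu0 k) (hu hk)
    constructor
    · simpa using hlawk.half_le_measure_nonneg_of_gaussianReal
    · simpa using hlawk.neg_of_gaussianReal.half_le_measure_nonneg_of_gaussianReal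
  have h := levy_maximal_ineq_abs (S := fun k ω => W (u k) ω - W (u 0) ω)
    (fun k => (hW.hasLaw_sub (hu0 0) (hu (Nat.zero_le k))).aemeasurable)
    (fun k hk => by
      convert hW.indepFun_prefix_sub hu hu0 hk using 2
      ring)
    hmed z
  calc _ ≤ 2 * P {ω | z ≤ W (u M) ω - W (u 0) ω} + 2 * P {ω | z ≤ -(W (u M) ω - W (u 0) ω)} := h
    _ ≤ 2 * ENNReal.ofReal (exp (-z ^ 2 / (2 * (u M - u 0))))
        + 2 * ENNReal.ofReal (exp (-z ^ 2 / (2 * (u M - u 0)))) := by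
      rw [← hvar]
      gcongr
      exacts [hlaw.measure_ge_le_of_gaussianReal hz,
        hlaw.neg_of_gaussianReal.measure_ge_le_of_gaussianReal hz]
    _ = _ := by ring

theorem measure_exists_mem_Icc_lt_abs_sub_le (hW : IsBrownianMotion P W) {s t z : ℝ}
    (hs : 0 ≤ s) (hst : s ≤ t) (hz : 0 ≤ z) :
    P {ω | ∃ r ∈ Set.Icc s t, z < |W r ω - W s ω|}
      ≤ 4 * ENNReal.ofReal (exp (-z ^ 2 / (2 * (t - s)))) := by
  set u : ℕ → ℕ → ℝ := fun m j => s + j * ((t - s) / 2 ^ m)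
  have hu_mono : ∀ m, Monotone (u m) := fun m i j hij => by
    have : 0 ≤ (t - s) / 2 ^ m := div_nonneg (sub_nonneg.2 hst) (by positivity)
    simp only [u]; gcongr
  have hu_nonneg : ∀ m j, 0 ≤ u m j := fun m j =>
    hs.trans (by simpa [u] using hu_mono m (Nat.zero_le j))
  have hu_zero : ∀ m, u m 0 = s := fun m => by simp [u]
  have hu_last : ∀ m, u m (2 ^ m) = t := fun m => by simp [u]; field_simp; ring
  set E : ℕ → Set Ω := fun m => {ω | ∃ k ≤ 2 ^ m, z < |W (u m k) ω - W (u m 0) ω|}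
  have hE_mono : Monotone E := monotone_nat_of_le_succ fun m ω ⟨k, hk, hzk⟩ => by
    refine ⟨2 * k, by rw [pow_succ]; omega, ?_⟩
    convert hzk using 4 <;> simp only [u] <;> push_cast <;> field_simp <;> ring
  have hcover : {ω | ∃ r ∈ Set.Icc s t, z < |W r ω - W s ω|} ⊆ ⋃ m, E m := by
    rintro ω ⟨r, hr, hzr⟩
    have hU : IsOpen {r | z < |W r ω - W s ω|} :=
      isOpen_lt continuous_const ((hW.2.1 ω).sub continuous_const).abs
    obtain ⟨m, k, hk, hmem⟩ :=
      exists_dyadic_mem_of_isOpen hU (a := s) (h := t - s) (by simpa using hr) hzr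
    exact Set.mem_iUnion.2 ⟨m, k, hk, by simpa [u] using hmem⟩
  calc P {ω | ∃ r ∈ Set.Icc s t, z < |W r ω - W s ω|} ≤ P (⋃ m, E m) := measure_mono hcover
    _ = ⨆ m, P (E m) := hE_mono.measure_iUnion
    _ ≤ _ := iSup_le fun m => by
      simpa [E, hu_zero, hu_last] using
        hW.measure_exists_lt_abs_sub_le (hu_mono m) (hu_nonneg m) (2 ^ m) hz

lemma measure_lt_weightedModulus_le (hW : IsBrownianMotion P W) {T ℓ y : ℝ} (hℓ : 0 < ℓ)
    (hy : 0 ≤ y) :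
    P {ω | y < weightedModulus (fun t => W t ω) T ℓ}
      ≤ ENNReal.ofReal ((⌊T⌋₊ + 1) * (⌊T / ℓ⌋₊ + 1) * (4 * exp (-y ^ 2 / (16 * ℓ)))) := by
  set θ : ℕ → ℝ := fun j => (j + 1) * ℓ
  set bad : ℕ × ℕ → Set Ω := fun p => {ω | ∃ r ∈ Set.Icc (p.2 * θ p.1) ((p.2 + 2) * θ p.1),
    y * √(p.1 + 1) / 2 < |W r ω - W (p.2 * θ p.1) ω|}
  have hcover : {ω | y < weightedModulus (fun t => W t ω) T ℓ}
      ⊆ ⋃ p ∈ range (⌊T⌋₊ + 1) ×ˢ range (⌊T / ℓ⌋₊ + 1), bad p := by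
    intro ω hω
    by_contra hgood
    refine hω.not_ge (weightedModulus_le hℓ hy fun j hj i hi r hr => not_lt.1 fun hlt => ?_)
    exact hgood (Set.mem_biUnion (x := (j, i)) (by simp [hj, hi]) ⟨r, hr, hlt⟩)
  have hbad : ∀ p, P (bad p) ≤ 4 * ENNReal.ofReal (exp (-y ^ 2 / (16 * ℓ))) := by
    rintro ⟨j, i⟩
    have hθ : 0 < θ j := by positivity
    refine (hW.measure_exists_mem_Icc_lt_abs_sub_le (s := i * θ j) (t := (i + 2) * θ j)
      (z := y * √(j + 1) / 2) (by positivity) (by gcongr; linarith) (by positivity)).trans_eq ?_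
    congr 3
    have hsq : √((j : ℝ) + 1) ^ 2 = j + 1 := sq_sqrt (by positivity)
    simp only [θ]
    rw [div_pow, mul_pow, hsq]
    field_simp
    ring
  calc P {ω | y < weightedModulus (fun t => W t ω) T ℓ}
      ≤ ∑ p ∈ range (⌊T⌋₊ + 1) ×ˢ range (⌊T / ℓ⌋₊ + 1), P (bad p) :=
        (measure_mono hcover).trans (measure_biUnion_finset_le _ _)
    _ ≤ (range (⌊T⌋₊ + 1) ×ˢ range (⌊T / ℓ⌋₊ + 1)).card
          • (4 * ENNReal.ofReal (exp (-y ^ 2 / (16 * ℓ)))) :=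
        sum_le_card_nsmul _ _ _ fun p _ => hbad p
    _ = _ := by
        rw [card_product, card_range, card_range, nsmul_eq_mul, ← ENNReal.ofReal_natCast,
          ← ENNReal.ofReal_ofNat 4, ← ENNReal.ofReal_mul (by norm_num),
          ← ENNReal.ofReal_mul (by positivity)]
        push_cast
        rfl

end IsBrownianMotion

lemma Nat.floor_mul_add_one_le {n a : ℝ} (hn : 1 ≤ n) (ha : 0 ≤ a) :
    (⌊n * a⌋₊ : ℝ) + 1 ≤ n * (a + 1) := by
  nlinarith [Nat.floor_le (by positivity : 0 ≤ n * a)]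

lemma exp_neg_sq_div_le {ℓ : ℝ} (hℓ : 0 < ℓ) (x : ℝ) :
    exp (-(8 * ℓ + x) ^ 2 / (16 * ℓ)) ≤ exp (-(4 * ℓ)) * exp (-x - x ^ 2 / (18 * ℓ)) := by
  rw [← exp_add, exp_le_exp]
  have h16 : -(8 * ℓ + x) ^ 2 / (16 * ℓ) = -(4 * ℓ) - x - x ^ 2 / (16 * ℓ) := by
    field_simp; ring
  have h18 : x ^ 2 / (18 * ℓ) ≤ x ^ 2 / (16 * ℓ) :=
    div_le_div_of_nonneg_left (sq_nonneg x) (by positivity) (by linarith)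
  linarith

lemma floor_succ_mul_floor_succ_mul_exp_le {n T : ℝ} (hn : 2 ≤ n) (hT : 0 ≤ T) (x : ℝ) :
    (⌊n * T⌋₊ + 1) * (⌊n * T / log n⌋₊ + 1) * (4 * exp (-(8 * log n + x) ^ 2 / (16 * log n)))
      ≤ 4 * (T + 1) * (T / log 2 + 1) * n ^ (-(2 : ℝ)) * exp (-x - x ^ 2 / (18 * log n)) := by
  have hn0 : 0 < n := by linarith
  have hℓ2 : log 2 ≤ log n := log_le_log two_pos hn
  have hℓ : 0 < log n := (log_pos one_lt_two).trans_le hℓ2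
  have hJ := Nat.floor_mul_add_one_le (n := n) (by linarith) hT
  have hI : (⌊n * T / log n⌋₊ : ℝ) + 1 ≤ n * (T / log 2 + 1) := by
    rw [mul_div_assoc]
    exact (Nat.floor_mul_add_one_le (by linarith) (by positivity)).trans (by gcongr)
  have hpow : exp (-(4 * log n)) * (n * n) = n ^ (-(2 : ℝ)) :=
    calc exp (-(4 * log n)) * (n * n) = exp (-(4 * log n)) * (exp (log n) * exp (log n)) := by
          rw [exp_log hn0]
      _ = exp (log n * -2) := by rw [← exp_add, ← exp_add]; ring_nf
      _ = n ^ (-(2 : ℝ)) := (rpow_def_of_pos hn0 _).symm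
  calc _ ≤ (n * (T + 1)) * (n * (T / log 2 + 1))
        * (4 * (exp (-(4 * log n)) * exp (-x - x ^ 2 / (18 * log n)))) := by
        gcongr
        exact exp_neg_sq_div_le hℓ x
    _ = _ := by rw [← hpow]; ring

theorem stmt_11_general {Ω : Type*} [MeasurableSpace Ω] (P : Measure Ω)
    (W : ℝ → Ω → ℝ) (hW : IsBrownianMotion P W) (Tbar : ℝ) (hTbar : 0 < Tbar) :
    ∃ c κ lam : ℝ, 0 < c ∧ 0 < κ ∧ 0 < lam ∧ ∀ n : ℕ, 2 ≤ n →
      ∃ L : Ω → ℝ, (∀ ω, 0 ≤ L ω) ∧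
        (∀ ω, (⨆ δ : Set.Icc (0 : ℝ) ((n : ℝ) * Tbar),
            ((δ : ℝ) + 1) ^ (-(1 : ℝ) / 2) *
              ⨆ p : {p : ℝ × ℝ // 0 ≤ p.1 ∧ 0 ≤ p.2 ∧ p.1 + p.2 ≤ (n : ℝ) * Tbar ∧
                  p.2 ≤ (δ : ℝ) * Real.log n},
                |W (p.1.1 + p.1.2) ω - W p.1.1 ω|) ≤ c * Real.log n + L ω) ∧
        ∀ x : ℝ, 0 ≤ x → P {ω | L ω > x} ≤
          ENNReal.ofReal (κ * (n : ℝ) ^ (-(2 : ℝ)) *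
            Real.exp (-lam * x - x ^ 2 / (18 * Real.log n))) := by
  refine ⟨8, 4 * (Tbar + 1) * (Tbar / log 2 + 1), 1, by norm_num, by positivity, one_pos,
    fun n hn => ?_⟩
  have hn2 : (2 : ℝ) ≤ n := by exact_mod_cast hn
  set Λ : Ω → ℝ := fun ω => weightedModulus (fun t => W t ω) (n * Tbar) (log n)
  refine ⟨fun ω => max (Λ ω - 8 * log n) 0, fun ω => le_max_right _ _,
    fun ω => sub_le_iff_le_add'.1 (le_max_left _ _), fun x hx => ?_⟩
  have hevent : {ω | max (Λ ω - 8 * log n) 0 > x} = {ω | 8 * log n + x < Λ ω} := by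
    ext ω
    simp [hx.not_gt, lt_sub_iff_add_lt']
  rw [hevent, neg_one_mul]
  exact (hW.measure_lt_weightedModulus_le (log_pos (by linarith)) (by positivity)).trans
    (ENNReal.ofReal_le_ofReal (floor_succ_mul_floor_succ_mul_exp_le hn2 hTbar.le x))

theorem stmt_11 {Ω : Type*} [MeasurableSpace Ω] (P : Measure Ω) [IsProbabilityMeasure P]
    (W : ℝ → Ω → ℝ) (hW : IsBrownianMotion P W) (Tbar : ℝ) (hTbar : 0 < Tbar) :
    ∃ c κ lam : ℝ, 0 < c ∧ 0 < κ ∧ 0 < lam ∧ ∀ n : ℕ, 2 ≤ n →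
      ∃ L : Ω → ℝ, (∀ ω, 0 ≤ L ω) ∧
        (∀ ω, (⨆ δ : Set.Icc (0 : ℝ) ((n : ℝ) * Tbar),
            ((δ : ℝ) + 1) ^ (-(1 : ℝ) / 2) *
              ⨆ p : {p : ℝ × ℝ // 0 ≤ p.1 ∧ 0 ≤ p.2 ∧ p.1 + p.2 ≤ (n : ℝ) * Tbar ∧
                  p.2 ≤ (δ : ℝ) * Real.log n},
                |W (p.1.1 + p.1.2) ω - W p.1.1 ω|) ≤ c * Real.log n + L ω) ∧
        ∀ x : ℝ, 0 ≤ x → P {ω | L ω > x} ≤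
          ENNReal.ofReal (κ * (n : ℝ) ^ (-(2 : ℝ)) *
            Real.exp (-lam * x - x ^ 2 / (18 * Real.log n))) :=
  stmt_11_general P W hW Tbar hTbar
end
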